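/- arXiv:0903.0354 — 3 statements merged into one kernel-verified Lean document; each statement's English description precedes it below -/
import Mathlib

section
/- Let N ≥ 3 and let v ∈ L¹(ℝᴺ) be such that v = ∂φ/∂x₁ for some φ in the homogeneous Sobolev space D^{1,2}(ℝᴺ) (i.e. φ ∈ L²_loc with ∇φ ∈ L²). Then ∫_{ℝᴺ} v(x) dx = 0. -/
/-!
Write `x = (t, y)` with `t = x₁`, and let `g y = ∫ v(t, y) dt = lim_{T → ∞} (φ(T, y) - φ(-T, y))`,
so that `∫ v = ∫ g`. For a unit vector `e` orthogonal to `x₁` (this needs `N ≥ 2`),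
`∫ |φ(t, y + e) - φ(t, y)|² dy ≤ ∫ |∂_e φ(t, y)|² dy =: b(t)`, and `∫ b < ∞` since `∇φ ∈ L²`.
Along a sequence `T_n → ∞` with `b(T_n) + b(-T_n) → 0`, Fatou's lemma then shows `g(y + e) = g(y)`
for a.e. `y`. An integrable function that is periodic in the direction `e` has integral zero.
-/

open MeasureTheory Filter Set Topology
open scoped ENNReal NNReal

theorem ENNReal.add_sq_le (a b : ℝ≥0∞) : (a + b) ^ 2 ≤ 2 * (a ^ 2 + b ^ 2) := by
  rcases eq_top_or_lt_top a with rfl | ha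
  · simp
  rcases eq_top_or_lt_top b with rfl | hb
  · simp
  lift a to ℝ≥0 using ha.ne
  lift b to ℝ≥0 using hb.ne
  exact_mod_cast (_root_.add_sq_le : (a + b) ^ 2 ≤ 2 * (a ^ 2 + b ^ 2))

theorem sq_lintegral_le_lintegral_sq {α : Type*} [MeasurableSpace α] {μ : Measure α}
    [IsProbabilityMeasure μ] {f : α → ℝ≥0∞} (hf : AEMeasurable f μ) :
    (∫⁻ x, f x ∂μ) ^ 2 ≤ ∫⁻ x, f x ^ 2 ∂μ := by
  have h := eLpNorm_le_eLpNorm_of_exponent_le one_le_two hf.aestronglyMeasurable (μ := μ)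
  rw [eLpNorm_one_eq_lintegral_enorm] at h
  have h2 := eLpNorm_nnreal_pow_eq_lintegral (f := f) (μ := μ) (p := 2) two_ne_zero
  simp only [NNReal.coe_ofNat, ENNReal.coe_ofNat, ENNReal.rpow_two, enorm_eq_self] at h h2
  rw [← h2]
  exact pow_le_pow_left₀ zero_le h 2

theorem MeasureTheory.MemLp.lintegral_enorm_sq_ne_top {α E : Type*} [MeasurableSpace α]
    {μ : Measure α} [NormedAddCommGroup E] {f : α → E} (hf : MemLp f 2 μ) :
    ∫⁻ x, ‖f x‖ₑ ^ 2 ∂μ ≠ ∞ := by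
  simpa [ENNReal.rpow_two] using
    (lintegral_rpow_enorm_lt_top_of_eLpNorm_lt_top two_ne_zero ENNReal.ofNat_ne_top hf.2).ne

theorem exists_seq_tendsto_atTop_tendsto_zero_of_lintegral_ne_top {c : ℝ → ℝ≥0∞}
    (hc : ∫⁻ t, c t ≠ ∞) : ∃ T : ℕ → ℝ, Tendsto T atTop atTop ∧ Tendsto (c ∘ T) atTop (𝓝 0) := by
  have : ∀ n : ℕ, ∃ t ≥ (n : ℝ), c t ≤ ((n : ℝ≥0∞) + 1)⁻¹ := by
    intro n
    by_contra! h
    refine hc (top_le_iff.1 ?_)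
    calc ∞ = ∫⁻ _ in Ici (n : ℝ), ((n : ℝ≥0∞) + 1)⁻¹ := by simp [ENNReal.mul_top]
      _ ≤ ∫⁻ t in Ici (n : ℝ), c t := setLIntegral_mono' measurableSet_Ici fun t ht => (h t ht).le
      _ ≤ ∫⁻ t, c t := setLIntegral_le_lintegral _ _
  choose T hT hcT using this
  refine ⟨T, tendsto_atTop_mono hT tendsto_natCast_atTop_atTop, ?_⟩
  refine tendsto_of_tendsto_of_tendsto_of_le_of_le tendsto_const_nhds ?_ (fun n => zero_le) hcT
  simpa [Function.comp_def] using ENNReal.tendsto_inv_nat_nhds_zero.comp (tendsto_add_atTop_nat 1)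

variable {F : Type*} [NormedAddCommGroup F]

theorem ae_eq_zero_of_tendsto_lintegral_enorm_sq {α ι : Type*} [MeasurableSpace α]
    {μ : Measure α} {l : Filter ι} [l.NeBot] [l.IsCountablyGenerated] {f : ι → α → F}
    {g : α → F} (hf : ∀ i, AEStronglyMeasurable (f i) μ)
    (hlim : ∀ᵐ x ∂μ, Tendsto (fun i => f i x) l (𝓝 (g x)))
    (h0 : Tendsto (fun i => ∫⁻ x, ‖f i x‖ₑ ^ 2 ∂μ) l (𝓝 0)) : g =ᵐ[μ] 0 := by
  have hg : AEStronglyMeasurable g μ := aestronglyMeasurable_of_tendsto_ae l hf hlim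
  have hle : ∫⁻ x, ‖g x‖ₑ ^ 2 ∂μ ≤ 0 := calc
    ∫⁻ x, ‖g x‖ₑ ^ 2 ∂μ = ∫⁻ x, liminf (fun i => ‖f i x‖ₑ ^ 2) l ∂μ :=
      lintegral_congr_ae <| hlim.mono fun x hx =>
        (ENNReal.Tendsto.pow ((continuous_enorm.tendsto _).comp hx)).liminf_eq.symm
    _ ≤ liminf (fun i => ∫⁻ x, ‖f i x‖ₑ ^ 2 ∂μ) l :=
      lintegral_liminf_le' fun i => (hf i).enorm.pow_const 2
    _ = 0 := h0.liminf_eq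
  filter_upwards [(lintegral_eq_zero_iff' (hg.enorm.pow_const 2)).1 (nonpos_iff_eq_zero.1 hle)]
    with x hx
  simpa using hx

theorem lintegral_enorm_sub_sq_le {α : Type*} [MeasurableSpace α] {μ : Measure α} {f g : α → F}
    (hf : AEStronglyMeasurable f μ) :
    ∫⁻ x, ‖f x - g x‖ₑ ^ 2 ∂μ ≤ 2 * (∫⁻ x, ‖f x‖ₑ ^ 2 ∂μ + ∫⁻ x, ‖g x‖ₑ ^ 2 ∂μ) :=
  calc ∫⁻ x, ‖f x - g x‖ₑ ^ 2 ∂μ ≤ ∫⁻ x, 2 * (‖f x‖ₑ ^ 2 + ‖g x‖ₑ ^ 2) ∂μ :=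
        lintegral_mono fun x =>
          (pow_le_pow_left₀ zero_le enorm_sub_le 2).trans (ENNReal.add_sq_le _ _)
    _ = 2 * (∫⁻ x, ‖f x‖ₑ ^ 2 ∂μ + ∫⁻ x, ‖g x‖ₑ ^ 2 ∂μ) := by
        rw [lintegral_const_mul' _ _ ENNReal.ofNat_ne_top,
          lintegral_add_left' (hf.enorm.pow_const 2)]

variable [NormedSpace ℝ F]

theorem integral_eq_zero_of_ae_add_eq {Y : Type*} [NormedAddCommGroup Y] [NormedSpace ℝ Y]
    [MeasurableSpace Y] [BorelSpace Y] {μ : Measure Y} [μ.IsAddRightInvariant] {g : Y → F}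
    {e : Y} (he : e ≠ 0) (hg : Integrable g μ) (hper : ∀ᵐ y ∂μ, g (y + e) = g y) :
    ∫ y, g y ∂μ = 0 := by
  obtain ⟨ℓ₀, -, hℓ₀⟩ := exists_dual_vector ℝ e (norm_ne_zero_iff.2 he)
  set ℓ := ‖e‖⁻¹ • ℓ₀
  have hℓ : ∀ y, ℓ (y + e) = ℓ y + 1 := fun y => by
    simp [ℓ, hℓ₀, mul_add, inv_mul_cancel₀ (norm_ne_zero_iff.2 he)]
  set A : ℤ → Set Y := fun k => ℓ ⁻¹' Ico (k : ℝ) (k + 1)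
  have hA : ∀ k, MeasurableSet (A k) := fun k => ℓ.continuous.measurable measurableSet_Ico
  have hshift : ∀ k : ℤ, (· + e) ⁻¹' A (k + 1) = A k := fun k => by
    ext y
    simp [A, hℓ]
  set c : ℤ → F := fun k => ∫ y in A k, g y ∂μ
  have hc : ∀ k, c (k + 1) = c k := fun k => by
    simp only [c]
    rw [← (measurePreserving_add_right μ e).setIntegral_preimage_emb
      (measurableEmbedding_addRight e) g (A (k + 1)), hshift]
    exact setIntegral_congr_ae (hA k) (hper.mono fun y hy _ => hy)
  have hc0 : ∀ k, c k = c 0 := fun k => by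
    induction k using Int.induction_on with
    | zero => rfl
    | succ k ih => rw [hc, ih]
    | pred k ih => rw [← ih, ← hc]; simp
  have hsum : HasSum c (∫ y, g y ∂μ) := by
    have hunion : ⋃ k, A k = univ := by simp [A, ← preimage_iUnion, iUnion_Ico_intCast]
    simpa [hunion] using hasSum_integral_iUnion hA
      ((pairwise_disjoint_Ico_intCast ℝ).mono fun k l h => h.preimage ℓ)
      (by rw [hunion]; exact hg.integrableOn)
  have hsum0 : HasSum (fun _ : ℤ => c 0) (∫ y, g y ∂μ) := by
    convert hsum using 1
    exact (funext hc0).symm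
  have : c 0 = 0 := tendsto_const_nhds_iff.1 hsum0.summable.tendsto_cofinite_zero
  rw [this] at hsum0
  exact hsum0.unique hasSum_zero

theorem hasDerivAt_comp_prodMk_left {Y : Type*} [NormedAddCommGroup Y] [NormedSpace ℝ Y]
    {φ : ℝ × Y → F} (hφ : Differentiable ℝ φ) (t : ℝ) (y : Y) :
    HasDerivAt (fun t => φ (t, y)) (fderiv ℝ φ (t, y) (1, 0)) t :=
  (hφ _).hasFDerivAt.comp_hasDerivAt t ((hasDerivAt_id t).prodMk (hasDerivAt_const t y))

theorem fderiv_comp_prodMk_right_apply {Y : Type*} [NormedAddCommGroup Y] [NormedSpace ℝ Y]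
    {φ : ℝ × Y → F} (hφ : Differentiable ℝ φ) (t : ℝ) (y e : Y) :
    fderiv ℝ (fun y => φ (t, y)) y e = fderiv ℝ φ (t, y) (0, e) := by
  have h : HasFDerivAt (fun y => φ (t, y))
      ((fderiv ℝ φ (t, y)).comp ((0 : Y →L[ℝ] ℝ).prod (ContinuousLinearMap.id ℝ Y))) y :=
    (hφ _).hasFDerivAt.comp y ((hasFDerivAt_const t y).prodMk (hasFDerivAt_id y))
  simp [h.fderiv]

variable [CompleteSpace F]

theorem tendsto_sub_neg_atTop_integral {u u' : ℝ → F}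
    (hu : ∀ t, HasDerivAt u (u' t) t) (hu' : Integrable u') :
    Tendsto (fun T => u T - u (-T)) atTop (𝓝 (∫ t, u' t)) :=
  (intervalIntegral_tendsto_integral hu' tendsto_neg_atTop_atBot tendsto_id).congr fun _ =>
    intervalIntegral.integral_eq_sub_of_hasDerivAt (fun t _ => hu t) hu'.intervalIntegrable

theorem enorm_sub_sq_le_lintegral_enorm_deriv_sq {u : ℝ → F} (hu : Differentiable ℝ u) :
    ‖u 1 - u 0‖ₑ ^ 2 ≤ ∫⁻ s in Ioc 0 1, ‖deriv u s‖ₑ ^ 2 := by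
  by_cases hfin : ∫⁻ s in Ioc 0 1, ‖deriv u s‖ₑ ^ 2 = ∞
  · simp [hfin]
  set μ := volume.restrict (Ioc (0 : ℝ) 1)
  have : IsProbabilityMeasure μ := ⟨by simp [μ]⟩
  have hmeas : AEStronglyMeasurable (deriv u) μ := aestronglyMeasurable_deriv u μ
  have hL2 : MemLp (deriv u) 2 μ := by
    refine ⟨hmeas,
      (eLpNorm_lt_top_iff_lintegral_rpow_enorm_lt_top two_ne_zero ENNReal.ofNat_ne_top).2 ?_⟩
    simpa [ENNReal.rpow_two] using lt_top_iff_ne_top.2 hfin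
  have hftc : u 1 - u 0 = ∫ s, deriv u s ∂μ := by
    rw [← intervalIntegral.integral_of_le zero_le_one]
    refine (intervalIntegral.integral_eq_sub_of_hasDerivAt (fun s _ => (hu s).hasDerivAt) ?_).symm
    exact (intervalIntegrable_iff_integrableOn_Ioc_of_le zero_le_one).2 (hL2.integrable one_le_two)
  calc ‖u 1 - u 0‖ₑ ^ 2 ≤ (∫⁻ s, ‖deriv u s‖ₑ ∂μ) ^ 2 := by
        rw [hftc]; exact pow_le_pow_left₀ zero_le (enorm_integral_le_lintegral_enorm _) 2
    _ ≤ ∫⁻ s, ‖deriv u s‖ₑ ^ 2 ∂μ := sq_lintegral_le_lintegral_sq hmeas.enorm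

theorem lintegral_enorm_sub_sq_le_lintegral_enorm_fderiv_sq {E : Type*} [NormedAddCommGroup E]
    [NormedSpace ℝ E] [MeasurableSpace E] [BorelSpace E] {μ : Measure E} [SFinite μ]
    [μ.IsAddRightInvariant] {f : E → F} (hf : Differentiable ℝ f) (h : E) :
    ∫⁻ x, ‖f (x + h) - f x‖ₑ ^ 2 ∂μ ≤ ∫⁻ x, ‖fderiv ℝ f x h‖ₑ ^ 2 ∂μ := by
  set G : E → ℝ≥0∞ := fun x => ‖fderiv ℝ f x h‖ₑ ^ 2
  have hG : Measurable G :=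
    ((continuous_enorm.comp (ContinuousLinearMap.apply ℝ F h).continuous).measurable.comp
      (measurable_fderiv ℝ f)).pow_const 2
  have hline : ∀ x, ‖f (x + h) - f x‖ₑ ^ 2 ≤ ∫⁻ s in Ioc (0 : ℝ) 1, G (x + s • h) := by
    intro x
    have hderiv : ∀ s : ℝ, HasDerivAt (fun s : ℝ => f (x + s • h)) (fderiv ℝ f (x + s • h) h) s :=
      fun s => (hf _).hasFDerivAt.comp_hasDerivAt s
        (((hasDerivAt_id s).smul_const h).const_add x |>.congr_deriv (by simp))
    simpa [(hderiv _).deriv, G] using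
      enorm_sub_sq_le_lintegral_enorm_deriv_sq (u := fun s : ℝ => f (x + s • h))
        (fun s => (hderiv s).differentiableAt)
  calc ∫⁻ x, ‖f (x + h) - f x‖ₑ ^ 2 ∂μ ≤ ∫⁻ x, (∫⁻ s in Ioc (0 : ℝ) 1, G (x + s • h)) ∂μ :=
        lintegral_mono hline
    _ = ∫⁻ s in Ioc (0 : ℝ) 1, ∫⁻ x, G (x + s • h) ∂μ :=
        lintegral_lintegral_swap (f := fun x s => G (x + s • h))
          (hG.comp (by fun_prop : Continuous fun p : E × ℝ => p.1 + p.2 • h).measurable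
            |>.aemeasurable)
    _ = ∫⁻ x, G x ∂μ := by
        simp [lintegral_add_right_eq_self (μ := μ) G]

section Slices

variable {Y : Type*} [NormedAddCommGroup Y] [NormedSpace ℝ Y] [SecondCountableTopology Y]
    [MeasurableSpace Y] [BorelSpace Y] {μ : Measure Y} [SFinite μ] [μ.IsAddRightInvariant]
    {φ : ℝ × Y → F}

theorem ae_integral_fderiv_fst_add_eq (hφ : Differentiable ℝ φ)
    (hv : Integrable (fun z => fderiv ℝ φ z (1, 0)) (volume.prod μ)) (e : Y)
    (hgrad : MemLp (fun z => fderiv ℝ φ z (0, e)) 2 (volume.prod μ)) :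
    ∀ᵐ y ∂μ, ∫ t, fderiv ℝ φ (t, y + e) (1, 0) = ∫ t, fderiv ℝ φ (t, y) (1, 0) := by
  set g : Y → F := fun y => ∫ t, fderiv ℝ φ (t, y) (1, 0)
  have hlim : ∀ᵐ y ∂μ, Tendsto (fun T => φ (T, y) - φ (-T, y)) atTop (𝓝 (g y)) :=
    hv.prod_left_ae.mono fun y hy =>
      tendsto_sub_neg_atTop_integral (hasDerivAt_comp_prodMk_left hφ · y) hy
  set b : ℝ → ℝ≥0∞ := fun t => ∫⁻ y, ‖fderiv ℝ φ (t, y) (0, e)‖ₑ ^ 2 ∂μ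
  have hgrad_meas : Measurable fun z => ‖fderiv ℝ φ z (0, e)‖ₑ ^ 2 :=
    ((continuous_enorm.comp (ContinuousLinearMap.apply ℝ F ((0 : ℝ), e)).continuous).measurable
      |>.comp (measurable_fderiv ℝ φ)).pow_const 2
  have hb : Measurable b := hgrad_meas.lintegral_prod_right'
  have hslice : ∀ t, ∫⁻ y, ‖φ (t, y + e) - φ (t, y)‖ₑ ^ 2 ∂μ ≤ b t := fun t => by
    simpa only [fderiv_comp_prodMk_right_apply hφ] using
      lintegral_enorm_sub_sq_le_lintegral_enorm_fderiv_sq (μ := μ)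
        (by fun_prop : Differentiable ℝ fun y => φ (t, y)) e
  obtain ⟨T, hT, hbT⟩ :=
    exists_seq_tendsto_atTop_tendsto_zero_of_lintegral_ne_top (c := fun t => b t + b (-t)) (by
      rw [lintegral_add_left hb, (Measure.measurePreserving_neg volume).lintegral_comp hb,
        ← lintegral_prod _ hgrad_meas.aemeasurable]
      exact ENNReal.add_ne_top.2
        ⟨hgrad.lintegral_enorm_sq_ne_top, hgrad.lintegral_enorm_sq_ne_top⟩)
  set Δ : ℝ → Y → F := fun t y => φ (t, y + e) - φ (t, y)
  have hΔ : ∀ t, Continuous (Δ t) := fun t => by have := hφ.continuous; fun_prop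
  have hD : ∀ n, ∫⁻ y, ‖Δ (T n) y - Δ (-T n) y‖ₑ ^ 2 ∂μ ≤ 2 * (b (T n) + b (-T n)) := fun n =>
    (lintegral_enorm_sub_sq_le (hΔ _).aestronglyMeasurable).trans (by gcongr <;> apply hslice)
  have hDlim : ∀ᵐ y ∂μ, Tendsto (fun n => Δ (T n) y - Δ (-T n) y) atTop (𝓝 (g (y + e) - g y)) := by
    filter_upwards [hlim, (measurePreserving_add_right μ e).quasiMeasurePreserving.ae hlim]
      with y h₀ hₑ
    refine ((hₑ.comp hT).sub (h₀.comp hT)).congr fun n => ?_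
    simp only [Function.comp_apply, Δ]
    abel
  have hD0 : Tendsto (fun n => ∫⁻ y, ‖Δ (T n) y - Δ (-T n) y‖ₑ ^ 2 ∂μ) atTop (𝓝 0) := by
    refine tendsto_of_tendsto_of_tendsto_of_le_of_le tendsto_const_nhds ?_ (fun n => zero_le) hD
    simpa using (ENNReal.Tendsto.const_mul hbT (.inr ENNReal.ofNat_ne_top))
  filter_upwards [ae_eq_zero_of_tendsto_lintegral_enorm_sq
    (fun n => ((hΔ _).sub (hΔ _)).aestronglyMeasurable) hDlim hD0] with y hy
  exact sub_eq_zero.1 hy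

theorem integral_fderiv_fst_eq_zero (hφ : Differentiable ℝ φ)
    (hv : Integrable (fun z => fderiv ℝ φ z (1, 0)) (volume.prod μ)) {e : Y} (he : e ≠ 0)
    (hgrad : MemLp (fun z => fderiv ℝ φ z (0, e)) 2 (volume.prod μ)) :
    ∫ z, fderiv ℝ φ z (1, 0) ∂(volume.prod μ) = 0 := by
  rw [integral_prod_symm _ hv]
  exact integral_eq_zero_of_ae_add_eq he hv.integral_prod_right
    (ae_integral_fderiv_fst_add_eq hφ hv e hgrad)

end Slices

noncomputable def EuclideanSpace.consEquivL (m : ℕ) :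
    (ℝ × (Fin m → ℝ)) ≃L[ℝ] EuclideanSpace ℝ (Fin (m + 1)) :=
  (Fin.consEquivL ℝ fun _ => ℝ).trans (EuclideanSpace.equiv (Fin (m + 1)) ℝ).symm

theorem EuclideanSpace.measurePreserving_consEquivL (m : ℕ) :
    MeasurePreserving (EuclideanSpace.consEquivL m) := by
  convert (PiLp.volume_preserving_toLp (Fin (m + 1))).comp
    (volume_preserving_piFinSuccAbove (fun _ : Fin (m + 1) => ℝ) 0).symm
  ext z i
  simp [EuclideanSpace.consEquivL]

theorem stmt_0_general (N : ℕ) [NeZero N] (hN : 3 ≤ N)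
    (φ v : EuclideanSpace ℝ (Fin N) → ℝ)
    (hφdiff : Differentiable ℝ φ)
    (hφgrad : MemLp (fun x => fderiv ℝ φ x) 2 volume)
    (hv : ∀ x, v x = fderiv ℝ φ x (EuclideanSpace.single 0 1))
    (hvL1 : Integrable v volume) :
    ∫ x, v x = 0 := by
  obtain ⟨m, rfl⟩ : ∃ m, N = m + 1 := ⟨N - 1, by omega⟩
  set L := EuclideanSpace.consEquivL m
  have hL := EuclideanSpace.measurePreserving_consEquivL m
  have hLemb : MeasurableEmbedding L := L.toHomeomorph.measurableEmbedding
  have hfderiv : ∀ z w, fderiv ℝ (φ ∘ L) z w = fderiv ℝ φ (L z) (L w) := fun z w => by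
    rw [L.comp_right_fderiv]; rfl
  have hv_comp : (fun z => fderiv ℝ (φ ∘ L) z (1, 0)) = v ∘ L := by
    ext z
    rw [hfderiv, Function.comp_apply, hv]
    congr 2
    ext i
    refine Fin.cases ?_ (fun i => ?_) i <;> simp [L, EuclideanSpace.consEquivL]
  set e : Fin m → ℝ := Pi.single ⟨0, by omega⟩ 1
  have hgrad : MemLp (fun z => fderiv ℝ (φ ∘ L) z (0, e)) 2 volume := by
    simp_rw [hfderiv]
    exact ((ContinuousLinearMap.apply ℝ ℝ (L (0, e))).comp_memLp' hφgrad).comp_measurePreserving hL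
  have hzero := integral_fderiv_fst_eq_zero (hφdiff.comp L.differentiable)
    (by rw [hv_comp]; exact (hL.integrable_comp_emb hLemb).2 hvL1) (by simp [e] : e ≠ 0) hgrad
  rw [hv_comp] at hzero
  rwa [← hL.integral_comp hLemb]

/-- If `N ≥ 3`, `v ∈ L¹(ℝᴺ)` and `v = ∂φ/∂x₁` for some `φ` in the homogeneous
Sobolev space `D^{1,2}(ℝᴺ)` (i.e. `φ ∈ L²_loc` with `∇φ ∈ L²`), then `∫ v = 0`. -/
theorem stmt_0 (N : ℕ) [NeZero N] (hN : 3 ≤ N)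
    (φ v : EuclideanSpace ℝ (Fin N) → ℝ)
    (hφdiff : Differentiable ℝ φ)
    (hφloc : LocallyIntegrable φ volume)
    (hφgrad : MemLp (fun x => fderiv ℝ φ x) 2 volume)
    (hv : ∀ x, v x = fderiv ℝ φ x (EuclideanSpace.single 0 1))
    (hvL1 : Integrable v volume) :
    ∫ x, v x = 0 :=
  stmt_0_general N hN φ v hφdiff hφgrad hv hvL1
end

section
/- Let r₀ > 0 and let φ : ℝ → ℝ be an odd smooth function with φ(s) = s for s ∈ [0, 2r₀], 0 ≤ φ' ≤ 1 on ℝ, and φ(s) = 3r₀ for s ≥ 4r₀. Then for any complex numbers z, ζ one has |φ(|r₀ − z|) − φ(|r₀ − ζ|)| ≤ [32 r₀ · φ(|z − ζ|²/(32 r₀))]^{1/2}. -/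
/-- Let `r₀ > 0` and `φ : ℝ → ℝ` be odd, smooth, with `φ(s) = s` on `[0, 2r₀]`,
`0 ≤ φ' ≤ 1` and `φ(s) = 3r₀` for `s ≥ 4r₀`. Then for all complex `z, ζ`,
`|φ(|r₀ − z|) − φ(|r₀ − ζ|)| ≤ √(32 r₀ · φ(|z − ζ|²/(32 r₀)))`. -/
theorem stmt_1 (r₀ : ℝ) (hr₀ : 0 < r₀) (φ : ℝ → ℝ)
    (hsmooth : ContDiff ℝ (⊤ : ℕ∞) φ)
    (hodd : ∀ s, φ (-s) = -φ s)
    (hid : ∀ s ∈ Set.Icc (0:ℝ) (2 * r₀), φ s = s)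
    (hd0 : ∀ s, 0 ≤ deriv φ s) (hd1 : ∀ s, deriv φ s ≤ 1)
    (hconst : ∀ s, 4 * r₀ ≤ s → φ s = 3 * r₀)
    (z ζ : ℂ) :
    |φ ‖(r₀ : ℂ) - z‖ - φ ‖(r₀ : ℂ) - ζ‖| ≤
      Real.sqrt (32 * r₀ * φ (‖z - ζ‖ ^ 2 / (32 * r₀))) := by
  have hdiff : Differentiable ℝ φ := hsmooth.differentiable (by simp)
  have mono : Monotone φ := monotone_of_deriv_nonneg hdiff hd0
  set a := ‖(r₀ : ℂ) - z‖ with ha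
  set b := ‖(r₀ : ℂ) - ζ‖ with hb
  set D := ‖z - ζ‖ with hD
  have hDnn : 0 ≤ D := norm_nonneg _
  have habD : |a - b| ≤ D := by
    have := abs_norm_sub_norm_le ((r₀ : ℂ) - z) ((r₀ : ℂ) - ζ)
    have h2 : (r₀ : ℂ) - z - ((r₀ : ℂ) - ζ) = ζ - z := by ring
    rw [h2] at this
    rw [norm_sub_rev ζ z] at this
    exact this
  have hrange : ∀ s : ℝ, 0 ≤ s → 0 ≤ φ s ∧ φ s ≤ 3 * r₀ := by
    intro s hs
    have h0 : φ 0 = 0 := hid 0 ⟨le_refl _, by positivity⟩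
    constructor
    · have := mono hs; rwa [h0] at this
    · rcases le_or_gt s (4 * r₀) with h | h
      · have := mono h; rwa [hconst (4 * r₀) le_rfl] at this
      · rw [hconst s h.le]
  set t := D ^ 2 / (32 * r₀) with ht
  have htnn : 0 ≤ t := by positivity
  rcases le_or_gt t (2 * r₀) with hcase | hcase
  · -- small case: φ t = t, RHS = D
    have hφt : φ t = t := hid t ⟨htnn, hcase⟩
    have hrhs : Real.sqrt (32 * r₀ * φ t) = D := by
      rw [hφt, ht]
      rw [show 32 * r₀ * (D ^ 2 / (32 * r₀)) = D ^ 2 by field_simp]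
      exact Real.sqrt_sq hDnn
    rw [hrhs]
    -- Lipschitz bound
    have lip : LipschitzWith 1 φ := by
      apply lipschitzWith_of_nnnorm_deriv_le hdiff
      intro x
      rw [← NNReal.coe_le_coe]
      simp only [coe_nnnorm, Real.norm_eq_abs, NNReal.coe_one]
      rw [abs_le]
      exact ⟨by linarith [hd0 x], hd1 x⟩
    have := lip.dist_le_mul a b
    rw [Real.dist_eq, Real.dist_eq, NNReal.coe_one, one_mul] at this
    exact this.trans habD
  · -- large case: φ t ≥ 2r₀, so RHS ≥ 8r₀ ≥ 3r₀ ≥ LHS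
    have hφt : 2 * r₀ ≤ φ t := by
      have h2 : φ (2 * r₀) = 2 * r₀ := hid (2 * r₀) ⟨by positivity, le_refl _⟩
      have := mono hcase.le
      rwa [h2] at this
    have hlhs : |φ a - φ b| ≤ 3 * r₀ := by
      obtain ⟨h1, h2⟩ := hrange a (norm_nonneg _)
      obtain ⟨h3, h4⟩ := hrange b (norm_nonneg _)
      rw [abs_sub_le_iff]
      constructor <;> linarith
    refine hlhs.trans ?_
    rw [show (3 : ℝ) * r₀ = Real.sqrt ((3 * r₀) ^ 2) by
      rw [Real.sqrt_sq (by positivity)]]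
    apply Real.sqrt_le_sqrt
    nlinarith
end

section
/- Let δ ∈ (0, r₀) and let u ∈ X be such that r₀ − δ ≤ |r₀ − u(x)| ≤ r₀ + δ almost everywhere on ℝᴺ. Then |Q(u)| ≤ E_GL(u) / (2a(r₀ − δ)), where Q is the momentum and E_GL the modified Ginzburg–Landau energy. -/
open MeasureTheory Complex Filter Metric
open scoped ENNReal Topology

noncomputable section

variable {N : ℕ} [NeZero N]

/-- Abbreviation for `ℝᴺ`. -/
abbrev Euc (N : ℕ) := EuclideanSpace ℝ (Fin N)

/-- The `j`-th partial derivative of `u`. -/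
def pd (u : Euc N → ℂ) (j : Fin N) (x : Euc N) : ℂ :=
  fderiv ℝ u x (EuclideanSpace.single j 1)

/-- The squared norm of the gradient `|∇u|²`. -/
def gradsq (u : Euc N → ℂ) (x : Euc N) : ℝ := ∑ j, ‖pd u j x‖ ^ 2

/-- The standard cut-off profile `φ`: odd, smooth, `φ(s) = s` on `[0, 2r₀]`,
`0 ≤ φ' ≤ 1`, and `φ(s) = 3r₀` for `s ≥ 4r₀`. -/
def IsCutoff (r₀ : ℝ) (φ : ℝ → ℝ) : Prop :=
  ContDiff ℝ (⊤ : ℕ∞) φ ∧ (∀ s, φ (-s) = -φ s) ∧ (∀ s ∈ Set.Icc (0:ℝ) (2 * r₀), φ s = s) ∧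
    (∀ s, 0 ≤ deriv φ s ∧ deriv φ s ≤ 1) ∧ (∀ s, 4 * r₀ ≤ s → φ s = 3 * r₀)

/-- Membership in the finite-energy space
`X = {u ∈ D^{1,2}(ℝᴺ) : φ²(|r₀ − u|) − r₀² ∈ L²(ℝᴺ)}`. -/
def MemX (r₀ : ℝ) (φ : ℝ → ℝ) (u : Euc N → ℂ) : Prop :=
  Differentiable ℝ u ∧
    MemLp u (ENNReal.ofReal (2 * N / ((N : ℝ) - 2))) volume ∧
    Integrable (gradsq u) volume ∧
    Integrable (fun x => (φ ‖(r₀ : ℂ) - u x‖ ^ 2 - r₀ ^ 2) ^ 2) volume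

/-- The modified Ginzburg–Landau energy of `u` in `Ω`. -/
def EGLΩ (a r₀ : ℝ) (φ : ℝ → ℝ) (Ω : Set (Euc N)) (u : Euc N → ℂ) : ℝ :=
  ∫ x in Ω, (gradsq u x + a ^ 2 * (φ ‖(r₀ : ℂ) - u x‖ ^ 2 - r₀ ^ 2) ^ 2)

/-- The modified Ginzburg–Landau energy of `u` in `ℝᴺ`. -/
def EGL (a r₀ : ℝ) (φ : ℝ → ℝ) (u : Euc N → ℂ) : ℝ :=
  ∫ x, (gradsq u x + a ^ 2 * (φ ‖(r₀ : ℂ) - u x‖ ^ 2 - r₀ ^ 2) ^ 2)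

/-- Membership in `Y = {∂φ/∂x₁ : φ ∈ D^{1,2}(ℝᴺ)}`. -/
def MemY (f : Euc N → ℝ) : Prop :=
  ∃ ψ : Euc N → ℝ, Differentiable ℝ ψ ∧
    MemLp (fun x => fderiv ℝ ψ x) 2 volume ∧
    ∀ x, f x = fderiv ℝ ψ x (EuclideanSpace.single 0 1)

/-- The momentum density `⟨i u_{x₁}, u⟩ = Re (i u_{x₁} ū)`. -/
def momInt (u : Euc N → ℂ) (x : Euc N) : ℝ :=
  (Complex.I * pd u 0 x * (starRingEnd ℂ) (u x)).re

/-- `L` is the continuous linear form on `L¹(ℝᴺ) + Y` with `L(v + w) = ∫ v`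
for `v ∈ L¹` and `w ∈ Y`. -/
def IsMomForm (L : (Euc N → ℝ) → ℝ) : Prop :=
  ∀ f g : Euc N → ℝ, Integrable f volume → MemY g → L (f + g) = ∫ x, f x

/-- The momentum `Q(u) = L(⟨i u_{x₁}, u⟩)`. -/
def QuadQ (L : (Euc N → ℝ) → ℝ) (u : Euc N → ℂ) : ℝ := L (momInt u)

/-- The potential `V(s) = ∫_s^{r₀²} F(τ) dτ`. -/
def Vfun (F : ℝ → ℝ) (r₀ : ℝ) (s : ℝ) : ℝ := ∫ τ in s..(r₀ ^ 2), F τ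

/-- Assumption (A1): `F` continuous on `[0,∞)`, `C¹` near `r₀²`, `F(r₀²) = 0`,
`F'(r₀²) < 0`. -/
def A1 (F : ℝ → ℝ) (r₀ : ℝ) : Prop :=
  ContinuousOn F (Set.Ici 0) ∧ (∃ ε > 0, ContDiffOn ℝ 1 F (ball (r₀ ^ 2) ε)) ∧
    F (r₀ ^ 2) = 0 ∧ deriv F (r₀ ^ 2) < 0

/-- Assumption (A2): the subcritical growth bound `|F(s)| ≤ C(1 + s^{p₀})`
with `p₀ < 2/(N−2)`. -/
def A2 (F : ℝ → ℝ) (N : ℕ) : Prop :=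
  ∃ C > (0:ℝ), ∃ p₀ : ℝ, p₀ < 2 / ((N : ℝ) - 2) ∧
    ∀ s : ℝ, 0 ≤ s → |F s| ≤ C * (1 + s ^ p₀)

/-- `a = √(−F'(r₀²)/2)`, so that the sound speed is `v_s = 2 a r₀`. -/
def aSound (F : ℝ → ℝ) (r₀ : ℝ) : ℝ := Real.sqrt (-(deriv F (r₀ ^ 2)) / 2)

/-- The transverse kinetic energy `A(u) = ∫ Σ_{j=2}^N |∂u/∂x_j|²`. -/
def Afun (u : Euc N → ℂ) : ℝ := ∫ x, ∑ j ∈ Finset.univ.erase 0, ‖pd u j x‖ ^ 2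

/-- `B_c(u) = ∫|u_{x₁}|² + c Q(u) + ∫ V(|r₀ − u|²)`. -/
def Bfun (L : (Euc N → ℝ) → ℝ) (F : ℝ → ℝ) (r₀ c : ℝ) (u : Euc N → ℂ) : ℝ :=
  (∫ x, ‖pd u 0 x‖ ^ 2) + c * QuadQ L u + ∫ x, Vfun F r₀ (‖(r₀ : ℂ) - u x‖ ^ 2)

/-- The energy `E_c(u) = ∫|∇u|² + c Q(u) + ∫ V(|r₀ − u|²)`. -/
def Ecfun (L : (Euc N → ℝ) → ℝ) (F : ℝ → ℝ) (r₀ c : ℝ) (u : Euc N → ℂ) : ℝ :=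
  (∫ x, gradsq u x) + c * QuadQ L u + ∫ x, Vfun F r₀ (‖(r₀ : ℂ) - u x‖ ^ 2)

/-- The Pohozaev functional `P_c(u) = ((N−3)/(N−1)) A(u) + B_c(u)`. -/
def Pcfun (L : (Euc N → ℝ) → ℝ) (F : ℝ → ℝ) (r₀ c : ℝ) (u : Euc N → ℂ) : ℝ :=
  ((N : ℝ) - 3) / ((N : ℝ) - 1) * Afun u + Bfun L F r₀ c u

/-- The dilation `u_{λ,σ}(x) = u(x₁/λ, x'/σ)`. -/
def dilate (l s : ℝ) (u : Euc N → ℂ) : Euc N → ℂ :=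
  fun x => u (WithLp.toLp 2 (fun i => if i = 0 then x i / l else x i / s))


/-! ### Auxiliary machinery: lifting of non-vanishing maps through `Complex.exp` -/

section Lifting

lemma mem_slit_of_norm_lt_one {z : ℂ} (h : ‖z - 1‖ < 1) : z ∈ Complex.slitPlane := by
  rw [Complex.mem_slitPlane_iff]
  left
  have h1 : |z.re - 1| ≤ ‖z - 1‖ := by
    have := Complex.abs_re_le_norm (z - 1); simpa using this
  have h2 := abs_lt.mp (lt_of_le_of_lt h1 h)
  linarith [h2.1]

lemma ratio_norm_lt_one {zd zn : ℂ} (h : ‖zn - zd‖ < ‖zd‖) : ‖zn / zd - 1‖ < 1 := by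
  have hzd : zd ≠ 0 := by
    intro h0
    rw [h0, norm_zero] at h
    exact absurd h (norm_nonneg _).not_gt
  have he : zn / zd - 1 = (zn - zd) / zd := by field_simp
  rw [he, norm_div, div_lt_one (norm_pos_iff.mpr hzd)]
  exact h
/-- piecewise-log lift along a path -/
def pc (γ : ℝ → ℂ) (n : ℕ) (t : ℝ) : ℂ :=
  Complex.log (γ 0) +
    ∑ j ∈ Finset.range n,
      Complex.log (γ (min (max t ((j : ℝ) / n)) (((j : ℝ) + 1) / n)) / γ ((j : ℝ) / n))

/-- hypothesis bundle on γ, n -/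
def PCHyp (γ : ℝ → ℂ) (n : ℕ) : Prop :=
  0 < n ∧ ∀ j < n, ∀ s ∈ Set.Icc ((j : ℝ) / n) (((j : ℝ) + 1) / n),
    ‖γ s - γ ((j : ℝ) / n)‖ < ‖γ ((j : ℝ) / n)‖

lemma div_le_div_succ {j : ℕ} {n : ℕ} (hn : 0 < n) : (j : ℝ) / n ≤ ((j : ℝ) + 1) / n := by
  have hn' : (0:ℝ) < n := by exact_mod_cast hn
  gcongr
  linarith

lemma PCHyp.ne_zero {γ : ℝ → ℂ} {n : ℕ} (h : PCHyp γ n) {j : ℕ} (hj : j < n) :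
    γ ((j : ℝ) / n) ≠ 0 := by
  have hm : (j : ℝ) / n ∈ Set.Icc ((j : ℝ) / n) (((j : ℝ) + 1) / n) :=
    ⟨le_refl _, div_le_div_succ h.1⟩
  have := h.2 j hj _ hm
  simp only [sub_self, norm_zero] at this
  intro h0
  rw [h0] at this; simp at this

lemma PCHyp.clamp_mem {n : ℕ} (hn : 0 < n) (j : ℕ) (t : ℝ) :
    min (max t ((j : ℝ) / n)) (((j : ℝ) + 1) / n) ∈
      Set.Icc ((j : ℝ) / n) (((j : ℝ) + 1) / n) :=
  ⟨le_min (le_max_right _ _) (div_le_div_succ hn), min_le_right _ _⟩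

lemma PCHyp.ratio_slit {γ : ℝ → ℂ} {n : ℕ} (h : PCHyp γ n) {j : ℕ} (hj : j < n) (t : ℝ) :
    γ (min (max t ((j : ℝ) / n)) (((j : ℝ) + 1) / n)) / γ ((j : ℝ) / n) ∈ Complex.slitPlane :=
  mem_slit_of_norm_lt_one (ratio_norm_lt_one (h.2 j hj _ (PCHyp.clamp_mem h.1 j t)))

lemma pc_continuous {γ : ℝ → ℂ} (hγ : Continuous γ) {n : ℕ} (h : PCHyp γ n) :
    Continuous (pc γ n) := by
  refine continuous_const.add (continuous_finset_sum _ fun j hj => ?_)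
  have hj' := Finset.mem_range.mp hj
  rw [continuous_iff_continuousAt]
  intro t
  exact ContinuousAt.clog
    ((hγ.comp (((continuous_id.max continuous_const)).min continuous_const)).div_const _).continuousAt
    (h.ratio_slit hj' t)

lemma pc_zero {γ : ℝ → ℂ} {n : ℕ} (h : PCHyp γ n) : pc γ n 0 = Complex.log (γ 0) := by
  unfold pc
  rw [Finset.sum_eq_zero, add_zero]
  intro j hj
  have hj' := Finset.mem_range.mp hj
  have h0 : (0:ℝ) ≤ (j : ℝ) / n := by positivity
  rw [max_eq_right h0, min_eq_left (div_le_div_succ h.1), div_self (h.ne_zero hj'),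
    Complex.log_one]

lemma pc_exp {γ : ℝ → ℂ} {n : ℕ} (h : PCHyp γ n) {t : ℝ} (ht : t ∈ Set.Icc (0:ℝ) 1) :
    Complex.exp (pc γ n t) = γ t := by
  have hne : ∀ j < n, γ (min (max t ((j : ℝ) / n)) (((j : ℝ) + 1) / n)) / γ ((j : ℝ) / n) ≠ 0 :=
    fun j hj => Complex.slitPlane_ne_zero (h.ratio_slit hj t)
  have hγ0 : γ 0 ≠ 0 := by
    have := h.ne_zero h.1
    simpa using this
  unfold pc
  rw [Complex.exp_add, Complex.exp_log hγ0, Complex.exp_sum]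
  have key : ∀ k ≤ n, γ 0 * ∏ j ∈ Finset.range k,
      Complex.exp (Complex.log (γ (min (max t ((j : ℝ) / n)) (((j : ℝ) + 1) / n)) / γ ((j : ℝ) / n)))
      = γ (min t ((k : ℝ) / n)) := by
    intro k hk
    induction k with
    | zero => simp [min_eq_right ht.1]
    | succ k ih =>
      rw [Finset.prod_range_succ, ← mul_assoc, ih (le_of_lt (Nat.lt_of_succ_le hk)),
        Complex.exp_log (hne k (Nat.lt_of_succ_le hk))]
      push_cast
      rcases le_total t ((k : ℝ) / n) with hle | hge
      · rw [min_eq_left hle, max_eq_right hle, min_eq_left (div_le_div_succ h.1),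
          div_self (h.ne_zero (Nat.lt_of_succ_le hk)), mul_one,
          min_eq_left (hle.trans (div_le_div_succ h.1))]
      · rw [min_eq_right hge, max_eq_left hge]
        rw [mul_div_cancel₀ _ (h.ne_zero (Nat.lt_of_succ_le hk))]
  have := key n (le_refl n)
  rw [this]
  have hn1 : (n : ℝ) / n = 1 := by
    have : (n:ℝ) ≠ 0 := Nat.cast_ne_zero.mpr h.1.ne'
    field_simp
  rw [hn1, min_eq_left ht.2]

lemma int_mul_norm_lt {k : ℤ} (h : ‖(k : ℂ) * (2 * Real.pi * I)‖ < 2 * Real.pi) :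
    (k : ℂ) * (2 * Real.pi * I) = 0 := by
  have hn : ‖(k : ℂ) * (2 * Real.pi * I)‖ = |(k:ℝ)| * (2 * Real.pi) := by
    rw [norm_mul, norm_mul, norm_mul]
    simp [Complex.norm_real, abs_of_pos Real.pi_pos, Complex.norm_intCast]
  rw [hn] at h
  have hk : |(k:ℝ)| < 1 := by nlinarith [Real.pi_pos]
  have h1 := abs_lt.mp hk
  have h1' : (-1:ℤ) < k := by exact_mod_cast h1.1
  have h2' : k < 1 := by exact_mod_cast h1.2
  have : k = 0 := by omega
  simp [this]

lemma lift_unique {c₁ c₂ : ℝ → ℂ} (h₁ : Continuous c₁) (h₂ : Continuous c₂)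
    (hexp : ∀ t ∈ Set.Icc (0:ℝ) 1, Complex.exp (c₁ t) = Complex.exp (c₂ t))
    (h0 : c₁ 0 = c₂ 0) : c₁ 1 = c₂ 1 := by
  set e : ℝ → ℂ := fun t => c₁ (min (max t 0) 1) - c₂ (min (max t 0) 1) with he
  have hecont : Continuous e := by
    have hcl : Continuous fun t : ℝ => min (max t 0) 1 :=
      (continuous_id.max continuous_const).min continuous_const
    exact (h₁.comp hcl).sub (h₂.comp hcl)
  have hmem : ∀ t : ℝ, ∃ k : ℤ, e t = k * (2 * Real.pi * I) := by
    intro t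
    have hin : min (max t 0) 1 ∈ Set.Icc (0:ℝ) 1 :=
      ⟨le_min (le_max_right _ _) zero_le_one, min_le_right _ _⟩
    obtain ⟨k, hk⟩ := Complex.exp_eq_exp_iff_exists_int.mp (hexp _ hin)
    exact ⟨k, by rw [he]; simp only; rw [hk]; ring⟩
  have hzero : ∀ t : ℝ, ‖e t‖ < 2 * Real.pi → e t = 0 := by
    intro t ht
    obtain ⟨k, hk⟩ := hmem t
    rw [hk] at ht ⊢
    exact int_mul_norm_lt ht
  have hS : IsClopen {t : ℝ | ‖e t‖ < 2 * Real.pi} := by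
    constructor
    · have hset : {t : ℝ | ‖e t‖ < 2 * Real.pi} = {t : ℝ | e t = 0} := by
        ext t
        simp only [Set.mem_setOf_eq]
        constructor
        · exact hzero t
        · intro h0'
          rw [h0', norm_zero]
          positivity
      rw [hset]
      exact isClosed_eq hecont continuous_const
    · exact isOpen_lt hecont.norm continuous_const
  have h0mem : (0:ℝ) ∈ {t : ℝ | ‖e t‖ < 2 * Real.pi} := by
    have he0 : e 0 = 0 := by
      rw [he]; simp [h0]
    simp only [Set.mem_setOf_eq, he0, norm_zero]
    positivity
  have huniv : {t : ℝ | ‖e t‖ < 2 * Real.pi} = Set.univ :=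
    (isClopen_iff.mp hS).resolve_left (by intro h; rw [h] at h0mem; exact h0mem)
  have h1mem : ‖e 1‖ < 2 * Real.pi := by
    have : (1:ℝ) ∈ {t : ℝ | ‖e t‖ < 2 * Real.pi} := huniv ▸ Set.mem_univ (1:ℝ)
    exact this
  have he1 : e 1 = 0 := hzero 1 h1mem
  rw [he] at he1
  simp only [max_self, le_refl, min_eq_right, zero_le_one, max_eq_left] at he1
  exact sub_eq_zero.mp he1

lemma exists_pchyp (w : Euc N → ℂ) (hw : Continuous w) (m : ℝ) (hm : 0 < m)
    (hlow : ∀ x, m ≤ ‖w x‖) (R : ℝ) (hR : 0 < R) :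
    ∃ n : ℕ, 0 < n ∧ ∀ y : Euc N, ‖y‖ ≤ R → PCHyp (fun t => w (t • y)) n := by
  have hK : IsCompact (closedBall (0 : Euc N) R) := isCompact_closedBall 0 R
  have huc := hK.uniformContinuousOn_of_continuous hw.continuousOn
  obtain ⟨ε, hε, hεp⟩ := (Metric.uniformContinuousOn_iff.mp huc) m hm
  set n : ℕ := ⌈R / ε⌉₊ + 1 with hn
  refine ⟨n, Nat.succ_pos _, fun y hy => ?_⟩
  have hnpos : (0:ℝ) < n := by positivity
  have hRn : R / n < ε := by
    rw [div_lt_iff₀ hnpos]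
    have h1 : R / ε ≤ (⌈R / ε⌉₊ : ℝ) := Nat.le_ceil (R / ε)
    have h2 : R / ε < n := by
      push_cast [hn]; linarith
    calc R = (R / ε) * ε := by field_simp
    _ < n * ε := by nlinarith
    _ = ε * n := by ring
  refine ⟨Nat.succ_pos _, fun j hj s hs => ?_⟩
  have hsmem : ∀ t : ℝ, 0 ≤ t → t ≤ 1 → t • y ∈ closedBall (0 : Euc N) R := by
    intro t ht0 ht1
    rw [mem_closedBall, dist_zero_right, norm_smul, Real.norm_eq_abs,
      _root_.abs_of_nonneg ht0]
    nlinarith [norm_nonneg y]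
  have hj0 : (0:ℝ) ≤ (j:ℝ)/n := by positivity
  have hj1 : ((j:ℝ)+1)/n ≤ 1 := by
    rw [div_le_one hnpos]
    have : (j:ℝ) + 1 ≤ n := by exact_mod_cast Nat.succ_le_of_lt hj
    linarith
  have hs0 : 0 ≤ s := le_trans hj0 hs.1
  have hs1 : s ≤ 1 := le_trans hs.2 hj1
  have hd : dist (s • y) (((j:ℝ)/n) • y) < ε := by
    rw [dist_eq_norm, ← sub_smul, norm_smul, Real.norm_eq_abs]
    have hinv : (0:ℝ) ≤ 1/n := by positivity
    have hdiff : ((j:ℝ)+1)/n - (j:ℝ)/n = 1/n := by ring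
    have habs : |s - (j:ℝ)/n| ≤ 1/n := by
      rw [abs_le]
      exact ⟨by linarith [hs.1], by linarith [hs.2]⟩
    calc |s - (j:ℝ)/n| * ‖y‖ ≤ (1/n) * R :=
          mul_le_mul habs hy (norm_nonneg y) hinv
    _ = R / n := by ring
    _ < ε := hRn
  have := hεp (s • y) (hsmem s hs0 hs1) (((j:ℝ)/n) • y)
    (hsmem _ hj0 (le_trans (div_le_div_succ (Nat.succ_pos _)) hj1)) hd
  rw [dist_eq_norm] at this
  exact lt_of_lt_of_le this (hlow _)

lemma global_lift (w : Euc N → ℂ) (hw : Continuous w) (m : ℝ) (hm : 0 < m)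
    (hlow : ∀ x, m ≤ ‖w x‖) :
    ∃ h : Euc N → ℂ, Continuous h ∧ ∀ x, Complex.exp (h x) = w x := by
  have hγc : ∀ y : Euc N, Continuous fun t : ℝ => w (t • y) := fun y =>
    hw.comp (continuous_id.smul continuous_const)
  have exLift : ∀ x : Euc N, ∃ c : ℝ → ℂ, Continuous c ∧ c 0 = Complex.log (w 0) ∧
      ∀ t ∈ Set.Icc (0:ℝ) 1, Complex.exp (c t) = w (t • x) := by
    intro x
    obtain ⟨n, hn, hP⟩ := exists_pchyp w hw m hm hlow (‖x‖ + 1) (by positivity)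
    have hPx := hP x (by linarith)
    refine ⟨pc (fun t => w (t • x)) n, pc_continuous (hγc x) hPx, ?_,
      fun t ht => pc_exp hPx ht⟩
    rw [pc_zero hPx, zero_smul]
  set h : Euc N → ℂ := fun x => (exLift x).choose 1 with hh
  have hspec : ∀ x, Continuous (exLift x).choose ∧ (exLift x).choose 0 = Complex.log (w 0) ∧
      ∀ t ∈ Set.Icc (0:ℝ) 1, Complex.exp ((exLift x).choose t) = w (t • x) :=
    fun x => (exLift x).choose_spec
  have hexp : ∀ x, Complex.exp (h x) = w x := by
    intro x
    have := (hspec x).2.2 1 ⟨zero_le_one, le_refl _⟩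
    rw [one_smul] at this
    exact this
  refine ⟨h, ?_, hexp⟩
  rw [continuous_iff_continuousAt]
  intro x₀
  obtain ⟨n, hn, hP⟩ := exists_pchyp w hw m hm hlow (‖x₀‖ + 1) (by positivity)
  set G : Euc N → ℂ := fun y => pc (fun t => w (t • y)) n 1 with hG
  have heq : ∀ y : Euc N, ‖y‖ ≤ ‖x₀‖ + 1 → h y = G y := by
    intro y hy
    have hPy := hP y hy
    refine lift_unique (hspec y).1 (pc_continuous (hγc y) hPy)
      (fun t ht => ?_) ?_
    · rw [(hspec y).2.2 t ht, pc_exp hPy ht]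
    · rw [(hspec y).2.1, pc_zero hPy, zero_smul]
  have hca : ∀ c : ℝ, ContinuousAt (fun y : Euc N => w (c • y)) x₀ := fun c =>
    hw.continuousAt.comp (continuous_const_smul c).continuousAt
  have hcontG : ContinuousAt G x₀ := by
    rw [hG]
    show ContinuousAt (fun y => Complex.log (w ((0:ℝ) • y)) +
      ∑ j ∈ Finset.range n, Complex.log
        (w ((min (max 1 ((j : ℝ) / n)) (((j : ℝ) + 1) / n)) • y) / w (((j : ℝ) / n) • y))) x₀
    apply ContinuousAt.add
    · simp only [zero_smul]
      exact continuousAt_const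
    · apply tendsto_finset_sum
      intro j hj
      have hj' := Finset.mem_range.mp hj
      have hPx := hP x₀ (by linarith)
      have hslit := hPx.ratio_slit hj' 1
      exact ContinuousAt.clog
        ((hca _).div (hca _) (hPx.ne_zero hj')) hslit
  apply hcontG.congr
  have hopen : IsOpen {y : Euc N | ‖y‖ < ‖x₀‖ + 1} := isOpen_lt continuous_norm continuous_const
  have hx₀ : x₀ ∈ {y : Euc N | ‖y‖ < ‖x₀‖ + 1} := by simp only [Set.mem_setOf_eq]; linarith
  filter_upwards [hopen.mem_nhds hx₀] with y hy
  exact (heq y (le_of_lt hy)).symm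

lemma hasFDerivAt_lift (w : Euc N → ℂ) (hw : Differentiable ℝ w) (h : Euc N → ℂ)
    (hh : Continuous h) (hexp : ∀ y, Complex.exp (h y) = w y) (x : Euc N) :
    HasFDerivAt h ((w x)⁻¹ • fderiv ℝ w x) x := by
  have hwx : w x ≠ 0 := by rw [← hexp x]; exact Complex.exp_ne_zero _
  set F : Euc N → ℂ := fun y => h x + Complex.log (w y / w x) with hF
  -- F has the desired derivative at x
  have hwd : HasFDerivAt w (fderiv ℝ w x) x := (hw x).hasFDerivAt
  have hdiv : HasFDerivAt (fun y => w y / w x) ((w x)⁻¹ • fderiv ℝ w x) x := by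
    simpa [div_eq_mul_inv, smul_smul, mul_comm] using hwd.mul_const (w x)⁻¹
  have hlog1 : HasDerivAt Complex.log ((1:ℂ))⁻¹ (1:ℂ) :=
    (Complex.hasStrictDerivAt_log (by simp [Complex.mem_slitPlane_iff])).hasDerivAt
  have hcomp : HasFDerivAt (fun y => Complex.log (w y / w x))
      ((w x)⁻¹ • fderiv ℝ w x) x := by
    have hval : w x / w x = 1 := div_self hwx
    have := (hval ▸ hlog1).comp_hasFDerivAt x hdiv
    simpa [div_self hwx, Function.comp_def] using this
  have hFd : HasFDerivAt F ((w x)⁻¹ • fderiv ℝ w x) x := hcomp.const_add (h x)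
  -- h agrees with F near x
  apply hFd.congr_of_eventuallyEq
  have hcl : ContinuousAt (fun y => Complex.log (w y / w x)) x := by
    apply ContinuousAt.clog
    · exact (hw.continuous.continuousAt).div continuousAt_const hwx
    · simp [div_self hwx, Complex.mem_slitPlane_iff]
  have hev1 : ∀ᶠ y in nhds x, ‖h y - h x‖ < 3 := by
    have : ContinuousAt (fun y => ‖h y - h x‖) x :=
      ((hh.continuousAt).sub continuousAt_const).norm
    have h0 : ‖h x - h x‖ < 3 := by norm_num
    exact this.eventually_lt continuousAt_const h0
  have hev2 : ∀ᶠ y in nhds x, ‖Complex.log (w y / w x)‖ < 3 := by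
    have : ContinuousAt (fun y => ‖Complex.log (w y / w x)‖) x := hcl.norm
    have h0 : ‖Complex.log (w x / w x)‖ < 3 := by
      rw [div_self hwx, Complex.log_one]; norm_num
    exact this.eventually_lt continuousAt_const h0
  filter_upwards [hev1, hev2] with y h1 h2
  -- show h y = F y
  have hwy : w y ≠ 0 := by rw [← hexp y]; exact Complex.exp_ne_zero _
  have hexp_eq : Complex.exp (h y - h x) = Complex.exp (Complex.log (w y / w x)) := by
    rw [Complex.exp_sub, hexp y, hexp x, Complex.exp_log (div_ne_zero hwy hwx)]
  obtain ⟨k, hk⟩ := Complex.exp_eq_exp_iff_exists_int.mp hexp_eq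
  have hknorm : ‖(k:ℂ) * (2 * Real.pi * I)‖ < 2 * Real.pi := by
    have : (k:ℂ) * (2 * Real.pi * I) = (h y - h x) - Complex.log (w y / w x) := by
      rw [hk]; ring
    rw [this]
    calc ‖(h y - h x) - Complex.log (w y / w x)‖ ≤ ‖h y - h x‖ + ‖Complex.log (w y / w x)‖ :=
          norm_sub_le _ _
    _ < 6 := by linarith
    _ ≤ 2 * Real.pi := by nlinarith [Real.pi_gt_three]
  have hk0 := int_mul_norm_lt hknorm
  rw [hk0, add_zero] at hk
  rw [hF]
  simp only
  rw [← hk]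
  ring

lemma opNorm_le_sqrt_sum {F : Type*} [NormedAddCommGroup F] [NormedSpace ℝ F]
    {N : ℕ} (T : Euc N →L[ℝ] F) :
    ‖T‖ ≤ Real.sqrt (∑ j, ‖T (EuclideanSpace.single j 1)‖ ^ 2) := by
  apply ContinuousLinearMap.opNorm_le_bound _ (Real.sqrt_nonneg _)
  intro v
  have hv : (∑ j, v j • (EuclideanSpace.single j (1:ℝ) : Euc N)) = v := by
    have := (EuclideanSpace.basisFun (Fin N) ℝ).sum_repr v
    simpa [EuclideanSpace.basisFun_apply, EuclideanSpace.basisFun_repr] using this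
  have h1 : ‖T v‖ ≤ ∑ j, |v j| * ‖T (EuclideanSpace.single j 1)‖ := by
    conv_lhs => rw [← hv]
    rw [map_sum]
    refine le_trans (norm_sum_le _ _) (le_of_eq (Finset.sum_congr rfl fun j _ => ?_))
    rw [_root_.map_smul, norm_smul, Real.norm_eq_abs]
  have h2 : (∑ j, |v j| * ‖T (EuclideanSpace.single j 1)‖) ^ 2 ≤
      (∑ j, (v j) ^ 2) * ∑ j, ‖T (EuclideanSpace.single j 1)‖ ^ 2 := by
    have := Finset.sum_mul_sq_le_sq_mul_sq Finset.univ (fun j => |v j|)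
      (fun j => ‖T (EuclideanSpace.single j 1)‖)
    simpa [_root_.sq_abs] using this
  have hnv : ‖v‖ = Real.sqrt (∑ j, (v j) ^ 2) := by
    rw [EuclideanSpace.norm_eq]
    congr 1
    exact Finset.sum_congr rfl fun j _ => by rw [Real.norm_eq_abs, _root_.sq_abs]
  have h3 : ∑ j, |v j| * ‖T (EuclideanSpace.single j 1)‖ ≤
      Real.sqrt (∑ j, (v j) ^ 2) * Real.sqrt (∑ j, ‖T (EuclideanSpace.single j 1)‖ ^ 2) := by
    have hnn : (0:ℝ) ≤ ∑ j, |v j| * ‖T (EuclideanSpace.single j 1)‖ :=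
      Finset.sum_nonneg fun j _ => mul_nonneg (abs_nonneg _) (norm_nonneg _)
    calc ∑ j, |v j| * ‖T (EuclideanSpace.single j 1)‖
        = Real.sqrt ((∑ j, |v j| * ‖T (EuclideanSpace.single j 1)‖) ^ 2) :=
          (Real.sqrt_sq hnn).symm
      _ ≤ Real.sqrt ((∑ j, (v j) ^ 2) * ∑ j, ‖T (EuclideanSpace.single j 1)‖ ^ 2) :=
          Real.sqrt_le_sqrt h2
      _ = _ := Real.sqrt_mul (Finset.sum_nonneg fun j _ => sq_nonneg _) _
  calc ‖T v‖ ≤ Real.sqrt (∑ j, (v j) ^ 2) * Real.sqrt (∑ j, ‖T (EuclideanSpace.single j 1)‖ ^ 2) :=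
        le_trans h1 h3
  _ = Real.sqrt (∑ j, ‖T (EuclideanSpace.single j 1)‖ ^ 2) * ‖v‖ := by rw [hnv]; ring

lemma norm_imCLM_comp_le {E : Type*} [NormedAddCommGroup E] [NormedSpace ℝ E]
    (T : E →L[ℝ] ℂ) : ‖Complex.imCLM.comp T‖ ≤ ‖T‖ := by
  apply ContinuousLinearMap.opNorm_le_bound _ (norm_nonneg T)
  intro v
  calc ‖(Complex.imCLM.comp T) v‖ = |(T v).im| := by simp [Real.norm_eq_abs]
  _ ≤ ‖T v‖ := Complex.abs_im_le_norm (T v)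
  _ ≤ ‖T‖ * ‖v‖ := T.le_opNorm v

lemma key_identity (p z : ℂ) (r₀ : ℝ) (hW : (r₀:ℂ) - z ≠ 0) :
    (Complex.I * p * (starRingEnd ℂ) z).re -
      (-(r₀ * p.im) - r₀^2 * (((((r₀:ℂ) - z))⁻¹ * (-p)).im)) =
    (p * (starRingEnd ℂ) ((r₀:ℂ) - z)).im *
      (Complex.normSq ((r₀:ℂ) - z) - r₀^2) / Complex.normSq ((r₀:ℂ) - z) := by
  have hns : Complex.normSq ((r₀:ℂ) - z) ≠ 0 := by
    simpa [Complex.normSq_eq_zero] using hW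
  simp only [Complex.mul_re, Complex.mul_im, Complex.inv_re, Complex.inv_im,
    Complex.conj_re, Complex.conj_im, Complex.I_re, Complex.I_im, Complex.sub_re,
    Complex.sub_im, Complex.ofReal_re, Complex.ofReal_im, Complex.neg_re, Complex.neg_im]
  field_simp
  ring

lemma aux_real {v q nw a e : ℝ} (ha : 0 < a) (he : 0 < e) (hle : e ≤ nw) (hq : 0 ≤ q)
    (hv : |v| ≤ q * nw) (r2 : ℝ) :
    |v * (nw^2 - r2) / nw^2| ≤ (q^2 + a^2 * (nw^2 - r2)^2) / (2 * a * e) := by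
  have hnw : 0 < nw := lt_of_lt_of_le he hle
  have hde : 0 < 2 * a * e := by positivity
  rw [abs_div, abs_mul, abs_of_pos (by positivity : (0:ℝ) < nw^2),
    div_le_div_iff₀ (by positivity) hde]
  have hXnn : (0:ℝ) ≤ |nw^2 - r2| := abs_nonneg _
  have k1 : 2*a*q*|nw^2 - r2| ≤ q^2 + a^2*|nw^2 - r2|^2 := by
    nlinarith [sq_nonneg (q - a*|nw^2 - r2|)]
  have k2 : |v| * |nw^2 - r2| * (2*a*e) ≤ (q*nw) * |nw^2 - r2| * (2*a*e) :=
    mul_le_mul_of_nonneg_right (mul_le_mul_of_nonneg_right hv hXnn) (le_of_lt hde)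
  have k3 : (q*nw) * |nw^2 - r2| * (2*a*e) = (2*a*q*|nw^2 - r2|)*(nw*e) := by ring
  have k4 : (2*a*q*|nw^2 - r2|)*(nw*e) ≤ (q^2+a^2*|nw^2 - r2|^2)*(nw*e) :=
    mul_le_mul_of_nonneg_right k1 (by positivity)
  have k5 : (q^2+a^2*|nw^2 - r2|^2)*(nw*e) ≤ (q^2+a^2*|nw^2 - r2|^2)*nw^2 := by
    apply mul_le_mul_of_nonneg_left ?_ (by positivity)
    nlinarith
  have hX2 : |nw^2 - r2|^2 = (nw^2 - r2)^2 := _root_.sq_abs _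
  rw [← hX2]
  linarith [k2, k3, k4, k5]

lemma pointwise_bound (p W : ℂ) (a r₀ δ : ℝ) (ha : 0 < a) (hδ0 : 0 < δ) (hδr : δ < r₀)
    (hlo : r₀ - δ ≤ ‖W‖) :
    |(p * (starRingEnd ℂ) W).im * (Complex.normSq W - r₀^2) / Complex.normSq W| ≤
      (‖p‖^2 + a^2 * (Complex.normSq W - r₀^2)^2) / (2 * a * (r₀ - δ)) := by
  have hns : Complex.normSq W = ‖W‖^2 := by
    rw [Complex.normSq_eq_norm_sq]
  have h1 : |(p * (starRingEnd ℂ) W).im| ≤ ‖p‖ * ‖W‖ := by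
    calc |(p * (starRingEnd ℂ) W).im| ≤ ‖p * (starRingEnd ℂ) W‖ :=
          Complex.abs_im_le_norm _
    _ = ‖p‖ * ‖W‖ := by
        rw [norm_mul]
        simp
  rw [hns]
  exact aux_real ha (by linarith) hlo (norm_nonneg p) h1 (r₀^2)

end Lifting

/-- If `δ ∈ (0, r₀)` and `u ∈ X` satisfies `r₀ − δ ≤ |r₀ − u| ≤ r₀ + δ` a.e.,
then `|Q(u)| ≤ E_GL(u)/(2a(r₀ − δ))`. -/
theorem stmt_4 {N : ℕ} [NeZero N] (hN : 3 ≤ N) (a r₀ δ : ℝ)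
    (ha : 0 < a) (hr₀ : 0 < r₀) (hδ : δ ∈ Set.Ioo 0 r₀)
    (φ : ℝ → ℝ) (hφ : IsCutoff r₀ φ)
    (L : (Euc N → ℝ) → ℝ) (hL : IsMomForm L)
    (u : Euc N → ℂ) (hu : MemX r₀ φ u)
    (hbound : ∀ᵐ x ∂(volume : Measure (Euc N)),
      r₀ - δ ≤ ‖(r₀ : ℂ) - u x‖ ∧ ‖(r₀ : ℂ) - u x‖ ≤ r₀ + δ) :
    |QuadQ L u| ≤ EGL a r₀ φ u / (2 * a * (r₀ - δ)) := by
  obtain ⟨hδ0, hδr⟩ := hδ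
  have hudiff := hu.1
  have hwdiff : Differentiable ℝ (fun y : Euc N => (r₀:ℂ) - u y) :=
    fun x => (differentiableAt_const _).sub (hudiff x)
  have hwcont : Continuous (fun y : Euc N => (r₀:ℂ) - u y) := hwdiff.continuous
  -- upgrade the a.e. bound to an everywhere bound
  have hbd : ∀ x : Euc N, r₀ - δ ≤ ‖(r₀:ℂ) - u x‖ ∧ ‖(r₀:ℂ) - u x‖ ≤ r₀ + δ := by
    by_contra hcon
    push_neg at hcon
    obtain ⟨x₀, hx₀⟩ := hcon
    set U : Set (Euc N) :=
      {x | ‖(r₀:ℂ) - u x‖ < r₀ - δ ∨ r₀ + δ < ‖(r₀:ℂ) - u x‖} with hUdef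
    have hUopen : IsOpen U :=
      (isOpen_lt hwcont.norm continuous_const).union (isOpen_lt continuous_const hwcont.norm)
    have hU0 : volume U = 0 := by
      have hae := ae_iff.mp hbound
      refine measure_mono_null ?_ hae
      intro x hx
      simp only [hUdef, Set.mem_setOf_eq] at hx ⊢
      rcases hx with hx | hx
      · intro hc; linarith [hc.1]
      · intro hc; linarith [hc.2]
    have hUempty : U = ∅ := (hUopen.measure_eq_zero_iff volume).mp hU0
    have hx₀U : x₀ ∈ U := by
      simp only [hUdef, Set.mem_setOf_eq]
      by_cases hA : r₀ - δ ≤ ‖(r₀:ℂ) - u x₀‖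
      · right
        exact hx₀ hA
      · left; linarith [not_le.mp hA]
    rw [hUempty] at hx₀U
    exact hx₀U
  -- lift : exp (h x) = r₀ - u x
  obtain ⟨h, hhc, hhexp⟩ := global_lift (fun y : Euc N => (r₀:ℂ) - u y) hwcont (r₀ - δ)
    (by linarith) (fun x => (hbd x).1)
  have hwne : ∀ x : Euc N, ((r₀:ℂ) - u x) ≠ 0 := fun x => by
    have := hhexp x
    rw [← this]
    exact Complex.exp_ne_zero _
  have hhd : ∀ x : Euc N,
      HasFDerivAt h (((r₀:ℂ) - u x)⁻¹ • fderiv ℝ (fun y : Euc N => (r₀:ℂ) - u y) x) x :=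
    fun x => hasFDerivAt_lift _ hwdiff h hhc hhexp x
  have hwfderiv : ∀ x : Euc N,
      fderiv ℝ (fun y : Euc N => (r₀:ℂ) - u y) x = -(fderiv ℝ u x) :=
    fun x => ((hudiff x).hasFDerivAt.const_sub _).fderiv
  -- the potential ψ₀
  set ψ₀ : Euc N → ℝ := fun y => -(r₀ * (u y).im) - r₀^2 * (h y).im with hψ₀def
  have hψd : ∀ x : Euc N, HasFDerivAt ψ₀
      (-(r₀ • (Complex.imCLM.comp (fderiv ℝ u x))) -
        (r₀^2) • (Complex.imCLM.comp ((((r₀:ℂ) - u x)⁻¹ : ℂ) • (-(fderiv ℝ u x))))) x := by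
    intro x
    have h1 : HasFDerivAt (fun y : Euc N => (u y).im)
        (Complex.imCLM.comp (fderiv ℝ u x)) x :=
      (Complex.imCLM.hasFDerivAt).comp x (hudiff x).hasFDerivAt
    have h2 : HasFDerivAt (fun y : Euc N => (h y).im)
        (Complex.imCLM.comp ((((r₀:ℂ) - u x)⁻¹ : ℂ) • (-(fderiv ℝ u x)))) x := by
      have := (Complex.imCLM.hasFDerivAt).comp x (hhd x)
      rwa [hwfderiv x] at this
    exact ((h1.const_mul r₀).neg).sub (h2.const_mul (r₀^2))
  set g : Euc N → ℝ := fun x => fderiv ℝ ψ₀ x (EuclideanSpace.single 0 1) with hgdef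
  have hgval : ∀ x : Euc N, g x =
      -(r₀ * (pd u 0 x).im) - r₀^2 * ((((r₀:ℂ) - u x)⁻¹ * (-(pd u 0 x))).im) := by
    intro x
    rw [hgdef]
    simp only
    rw [(hψd x).fderiv]
    simp only [ContinuousLinearMap.sub_apply, ContinuousLinearMap.neg_apply,
      ContinuousLinearMap.smul_apply, ContinuousLinearMap.coe_comp', Function.comp_apply,
      Complex.imCLM_apply, smul_eq_mul]
    rfl
  -- nonnegativity and measurability of gradsq
  have hgnn : ∀ x, 0 ≤ gradsq u x := fun x =>
    Finset.sum_nonneg fun j _ => sq_nonneg _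
  have hgradmeas : Measurable (gradsq u) := by
    apply Finset.measurable_sum
    intro j _
    exact ((measurable_fderiv_apply_const ℝ u _).norm).pow_const 2
  -- Memℒp of fderiv ψ₀
  have hCpos : 0 < r₀ + r₀^2 / (r₀ - δ) := by
    have h1 : 0 < r₀ - δ := by linarith
    positivity
  have hDnorm : ∀ x : Euc N, ‖fderiv ℝ ψ₀ x‖ ≤
      (r₀ + r₀^2 / (r₀ - δ)) * Real.sqrt (gradsq u x) := by
    intro x
    rw [(hψd x).fderiv]
    have hu' : ‖fderiv ℝ u x‖ ≤ Real.sqrt (gradsq u x) := opNorm_le_sqrt_sum _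
    have hnn : 0 ≤ ‖fderiv ℝ u x‖ := norm_nonneg _
    have e1 : ‖Complex.imCLM.comp (fderiv ℝ u x)‖ ≤ ‖fderiv ℝ u x‖ := norm_imCLM_comp_le _
    have e2 : ‖Complex.imCLM.comp ((((r₀:ℂ) - u x)⁻¹ : ℂ) • (-(fderiv ℝ u x)))‖ ≤
        ‖fderiv ℝ u x‖ / (r₀ - δ) := by
      refine le_trans (norm_imCLM_comp_le _) ?_
      rw [norm_smul (((r₀:ℂ) - u x)⁻¹) (-(fderiv ℝ u x)), norm_neg, norm_inv]
      have hge := (hbd x).1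
      have hpos : (0:ℝ) < r₀ - δ := by linarith
      have hWpos : (0:ℝ) < ‖(r₀:ℂ) - u x‖ := lt_of_lt_of_le hpos hge
      rw [div_eq_inv_mul]
      apply mul_le_mul_of_nonneg_right _ hnn
      exact inv_anti₀ hpos hge
    have hsq := Real.sqrt_nonneg (gradsq u x)
    calc ‖-(r₀ • (Complex.imCLM.comp (fderiv ℝ u x))) -
        (r₀^2) • (Complex.imCLM.comp ((((r₀:ℂ) - u x)⁻¹ : ℂ) • (-(fderiv ℝ u x))))‖
        ≤ ‖-(r₀ • (Complex.imCLM.comp (fderiv ℝ u x)))‖ +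
          ‖(r₀^2) • (Complex.imCLM.comp ((((r₀:ℂ) - u x)⁻¹ : ℂ) • (-(fderiv ℝ u x))))‖ :=
          norm_sub_le _ _
      _ = r₀ * ‖Complex.imCLM.comp (fderiv ℝ u x)‖ +
          r₀^2 * ‖Complex.imCLM.comp ((((r₀:ℂ) - u x)⁻¹ : ℂ) • (-(fderiv ℝ u x)))‖ := by
          rw [norm_neg, norm_smul r₀ (Complex.imCLM.comp (fderiv ℝ u x)),
            norm_smul (r₀^2)
              (Complex.imCLM.comp ((((r₀:ℂ) - u x)⁻¹ : ℂ) • (-(fderiv ℝ u x)))),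
            Real.norm_eq_abs, Real.norm_eq_abs,
            abs_of_pos hr₀, abs_of_pos (by positivity : (0:ℝ) < r₀^2)]
      _ ≤ r₀ * ‖fderiv ℝ u x‖ + r₀^2 * (‖fderiv ℝ u x‖ / (r₀ - δ)) := by
          have := mul_le_mul_of_nonneg_left e1 (le_of_lt hr₀)
          have := mul_le_mul_of_nonneg_left e2 (le_of_lt (by positivity : (0:ℝ) < r₀^2))
          linarith
      _ = (r₀ + r₀^2 / (r₀ - δ)) * ‖fderiv ℝ u x‖ := by ring
      _ ≤ (r₀ + r₀^2 / (r₀ - δ)) * Real.sqrt (gradsq u x) :=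
          mul_le_mul_of_nonneg_left hu' (le_of_lt hCpos)
  have hmem2 : MemLp (fun x => fderiv ℝ ψ₀ x) 2 volume := by
    have hmb : Measurable (fun x => (r₀ + r₀^2 / (r₀ - δ)) * Real.sqrt (gradsq u x)) :=
      (hgradmeas.sqrt).const_mul _
    have hb : MemLp (fun x => (r₀ + r₀^2 / (r₀ - δ)) * Real.sqrt (gradsq u x)) 2 volume := by
      rw [memLp_two_iff_integrable_sq hmb.aestronglyMeasurable]
      refine Integrable.congr ((hu.2.2.1).const_mul ((r₀ + r₀^2 / (r₀ - δ))^2))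
        (Filter.Eventually.of_forall fun x => ?_)
      simp only [mul_pow, Real.sq_sqrt (hgnn x)]
    refine MemLp.of_le hb ((measurable_fderiv ℝ ψ₀).aestronglyMeasurable)
      (Filter.Eventually.of_forall fun x => ?_)
    rw [Real.norm_eq_abs,
      _root_.abs_of_nonneg (mul_nonneg (le_of_lt hCpos) (Real.sqrt_nonneg _))]
    exact hDnorm x
  have hmemY : MemY g := ⟨ψ₀, fun x => (hψd x).differentiableAt, hmem2, fun x => rfl⟩
  -- decomposition of the momentum density
  set f : Euc N → ℝ := fun x => momInt u x - g x with hfdef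
  have hsum : momInt u = f + g := by
    funext x
    simp [hfdef, Pi.add_apply]
  have hfval : ∀ x : Euc N, f x = ((pd u 0 x) * (starRingEnd ℂ) ((r₀:ℂ) - u x)).im *
      (Complex.normSq ((r₀:ℂ) - u x) - r₀^2) / Complex.normSq ((r₀:ℂ) - u x) := by
    intro x
    rw [hfdef]
    simp only
    rw [hgval x, momInt]
    exact key_identity (pd u 0 x) (u x) r₀ (hwne x)
  have hfbound : ∀ x : Euc N, |f x| ≤
      (gradsq u x + a^2 * (φ ‖(r₀:ℂ) - u x‖^2 - r₀^2)^2) / (2*a*(r₀-δ)) := by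
    intro x
    rw [hfval x]
    refine le_trans (pointwise_bound (pd u 0 x) ((r₀:ℂ) - u x) a r₀ δ ha hδ0 hδr (hbd x).1) ?_
    have hden : (0:ℝ) < 2*a*(r₀-δ) := by
      have : (0:ℝ) < r₀ - δ := by linarith
      positivity
    have hpsq : ‖pd u 0 x‖^2 ≤ gradsq u x := by
      exact Finset.single_le_sum (f := fun j => ‖pd u j x‖^2)
        (fun j _ => sq_nonneg _) (Finset.mem_univ 0)
    have hphi : φ ‖(r₀:ℂ) - u x‖ = ‖(r₀:ℂ) - u x‖ := by
      apply hφ.2.2.1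
      refine ⟨norm_nonneg _, ?_⟩
      have := (hbd x).2
      linarith
    have hnseq : Complex.normSq ((r₀:ℂ) - u x) = (φ ‖(r₀:ℂ) - u x‖)^2 := by
      rw [hphi, Complex.normSq_eq_norm_sq]
    rw [hnseq]
    gcongr
  -- integrability
  have hM : Integrable (fun x : Euc N =>
      (gradsq u x + a^2 * (φ ‖(r₀:ℂ) - u x‖^2 - r₀^2)^2) / (2*a*(r₀-δ))) volume :=
    ((hu.2.2.1).add ((hu.2.2.2).const_mul (a^2))).div_const _
  have hfmeas : Measurable f := by
    have hm1 : Measurable (momInt u) := by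
      have hp : Measurable (fun x : Euc N => pd u 0 x) :=
        measurable_fderiv_apply_const ℝ u _
      have hu' : Measurable u := hudiff.continuous.measurable
      exact Complex.measurable_re.comp
        ((measurable_const.mul hp).mul (continuous_star.measurable.comp hu'))
    have hm2 : Measurable g := measurable_fderiv_apply_const ℝ ψ₀ _
    exact hm1.sub hm2
  have hfint : Integrable f volume := by
    refine Integrable.mono' hM hfmeas.aestronglyMeasurable
      (Filter.Eventually.of_forall fun x => ?_)
    rw [Real.norm_eq_abs]
    exact hfbound x
  -- conclusion
  have hQ : QuadQ L u = ∫ x, f x := by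
    rw [QuadQ, hsum]
    exact hL f g hfint hmemY
  rw [hQ]
  have h1 : |∫ x, f x| ≤ ∫ x, |f x| := by
    simpa [Real.norm_eq_abs] using
      norm_integral_le_integral_norm (μ := (volume : Measure (Euc N))) f
  have h2 : (∫ x, |f x|) ≤ ∫ x, (gradsq u x + a^2 * (φ ‖(r₀:ℂ) - u x‖^2 - r₀^2)^2) /
      (2*a*(r₀-δ)) :=
    integral_mono hfint.abs hM fun x => hfbound x
  have h3 : (∫ x, (gradsq u x + a^2 * (φ ‖(r₀:ℂ) - u x‖^2 - r₀^2)^2) / (2*a*(r₀-δ))) =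
      EGL a r₀ φ u / (2*a*(r₀-δ)) := by
    rw [EGL, ← integral_div]
  linarith
end
end
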